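/- Let g_1,...,g_{4n}, h_1, h_2, h_3 : [0,∞) → ℝ be positive differentiable functions satisfying the quaternionic Ricci-Bourguignon flow system with ρ < 0 (so each Σ_k is positive and nonincreasing). Then h_1(t) ≥ 1/(Σ_1(0) t + h_1(0)^{-1}) for all t ≥ 0, and hence ∫_0^t h_1(r) dr → ∞ as t → ∞. -/

import Mathlib

/-!
Since `ρ < 0` and every unknown is positive, each `g_j' = (positive) - ρ g_j Σ'` is nonnegative,
so the `g_j` are nondecreasing and `Σ_1` is nonincreasing. For `u = 1 / h_1` the equation for
`h_1` reads `u' = Σ_1 + ρ Σ' / h_1 ≤ Σ_1(0)`, hence `1 / h_1(t) ≤ Σ_1(0) t + 1 / h_1(0)`.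
Integrating the resulting lower bound for `h_1` gives
`∫_0^t h_1 ≥ log (1 + Σ_1(0) h_1(0) t) / Σ_1(0)`.
-/

open Set Filter

lemma monotoneOn_Ici_of_hasDerivAt_nonneg {f f' : ℝ → ℝ} {a : ℝ}
    (hf : ∀ t ∈ Ici a, HasDerivAt f (f' t) t) (hf' : ∀ t ∈ Ici a, 0 ≤ f' t) :
    MonotoneOn f (Ici a) :=
  monotoneOn_of_hasDerivWithinAt_nonneg (convex_Ici a)
    (fun t ht => (hf t ht).continuousAt.continuousWithinAt)
    (fun t ht => (hf t (interior_subset ht)).hasDerivWithinAt)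
    (fun t ht => hf' t (interior_subset ht))

lemma monotoneOn_Ici_of_hasDerivAt_sub_mul {f p q : ℝ → ℝ} {a ρ : ℝ} (hρ : ρ ≤ 0)
    (hf : ∀ t ∈ Ici a, HasDerivAt f (p t - ρ * f t * q t) t)
    (hf₀ : ∀ t ∈ Ici a, 0 ≤ f t) (hp : ∀ t ∈ Ici a, 0 ≤ p t) (hq : ∀ t ∈ Ici a, 0 ≤ q t) :
    MonotoneOn f (Ici a) :=
  monotoneOn_Ici_of_hasDerivAt_nonneg hf fun t ht =>
    sub_nonneg.2 <| (mul_nonpos_of_nonpos_of_nonneg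
      (mul_nonpos_of_nonpos_of_nonneg hρ (hf₀ t ht)) (hq t ht)).trans (hp t ht)

/-- Here `(1 / h)' = σ + ρ s / h ≤ c`, so `1 / h` grows at most linearly. -/
lemma one_div_le_of_hasDerivAt_riccati {h σ s : ℝ → ℝ} {a c ρ : ℝ} (hρ : ρ ≤ 0)
    (hh : ∀ t ∈ Ici a, HasDerivAt h (-(h t) ^ 2 * σ t - ρ * h t * s t) t)
    (hh₀ : ∀ t ∈ Ici a, 0 < h t) (hσ : ∀ t ∈ Ici a, σ t ≤ c) (hs : ∀ t ∈ Ici a, 0 ≤ s t) :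
    ∀ t ∈ Ici a, 1 / (c * (t - a) + (h a)⁻¹) ≤ h t := by
  have hmono : MonotoneOn (fun t => c * (t - a) - (h t)⁻¹) (Ici a) := by
    refine monotoneOn_Ici_of_hasDerivAt_nonneg (f' := fun t => c - (σ t + ρ * s t / h t))
      (fun t ht => ?_) (fun t ht => ?_)
    · refine ((((hasDerivAt_id t).sub_const a).const_mul c).sub
        ((hh t ht).inv (hh₀ t ht).ne')).congr_deriv ?_
      have := (hh₀ t ht).ne'
      field_simp
      ring
    · have hterm : ρ * s t / h t ≤ 0 := div_nonpos_of_nonpos_of_nonneg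
        (mul_nonpos_of_nonpos_of_nonneg hρ (hs t ht)) (hh₀ t ht).le
      linarith [hσ t ht]
  intro t ht
  have := hmono self_mem_Ici ht ht
  simp only [sub_self, mul_zero, zero_sub] at this
  rw [one_div]
  exact inv_le_of_inv_le₀ (hh₀ t ht) (by linarith)

lemma integral_one_div_mul_add {a b t : ℝ} (ha : 0 < a) (hb : 0 < b) (ht : 0 ≤ t) :
    ∫ r in (0 : ℝ)..t, 1 / (a * r + b) = a⁻¹ * Real.log ((a * t + b) / b) := by
  rw [intervalIntegral.integral_comp_mul_add (fun x => 1 / x) ha.ne', mul_zero, zero_add,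
    integral_one_div_of_pos hb (by positivity), smul_eq_mul]

lemma tendsto_integral_atTop_of_one_div_le {f : ℝ → ℝ} {a b : ℝ} (ha : 0 < a) (hb : 0 < b)
    (hf : ContinuousOn f (Ici 0)) (hle : ∀ t ∈ Ici 0, 1 / (a * t + b) ≤ f t) :
    Tendsto (fun t => ∫ r in (0 : ℝ)..t, f r) atTop atTop := by
  have hlog : Tendsto (fun t => a⁻¹ * Real.log ((a * t + b) / b)) atTop atTop :=
    (Real.tendsto_log_atTop.comp <| (tendsto_atTop_add_const_right _ b
      (tendsto_id.const_mul_atTop ha)).atTop_div_const hb).const_mul_atTop (inv_pos.2 ha)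
  refine tendsto_atTop_mono' atTop ?_ hlog
  filter_upwards [eventually_ge_atTop 0] with t ht
  have hlin : ∀ r ∈ Icc 0 t, a * r + b ≠ 0 := fun r hr => by have := hr.1; positivity
  rw [← integral_one_div_mul_add ha hb ht]
  refine intervalIntegral.integral_mono_on ht ?_ ?_ fun r hr => hle r hr.1
  · exact (continuousOn_const.div (by fun_prop) hlin).intervalIntegrable_of_Icc ht
  · exact (hf.mono Icc_subset_Ici_self).intervalIntegrable_of_Icc ht

lemma forall_mem_Icc_four_mul_blocks {n i : ℕ} {P : ℕ → Prop}
    (hP : ∀ j ∈ Finset.Icc 1 (4 * n), P j) (hi : i ∈ Finset.Icc 1 n) :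
    P i ∧ P (n + i) ∧ P (2 * n + i) ∧ P (3 * n + i) := by
  rw [Finset.mem_Icc] at hi
  refine ⟨hP _ ?_, hP _ ?_, hP _ ?_, hP _ ?_⟩ <;> rw [Finset.mem_Icc] <;> omega

theorem quaternion_RB_h1_lower_bound_general (n : ℕ) (hn : 1 ≤ n) (ρ : ℝ) (hρ : ρ < 0)
    (g : ℕ → ℝ → ℝ) (h1 h2 h3 : ℝ → ℝ) (S1 S2 S3 S' : ℝ → ℝ)
    (hS1 : ∀ t, S1 t = ∑ i ∈ Finset.Icc 1 n,
      (1 / (g i t * g (n + i) t) + 1 / (g (2*n + i) t * g (3*n + i) t)))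
    (hS2 : ∀ t, S2 t = ∑ i ∈ Finset.Icc 1 n,
      (1 / (g i t * g (3*n + i) t) + 1 / (g (n + i) t * g (2*n + i) t)))
    (hS3 : ∀ t, S3 t = ∑ i ∈ Finset.Icc 1 n,
      (1 / (g i t * g (2*n + i) t) + 1 / (g (n + i) t * g (3*n + i) t)))
    (hS' : ∀ t, S' t = h1 t * S1 t + h2 t * S2 t + h3 t * S3 t)
    (hpos : ∀ j ∈ Finset.Icc 1 (4 * n), ∀ t ∈ Set.Ici (0 : ℝ), 0 < g j t)
    (hpos1 : ∀ t ∈ Set.Ici (0 : ℝ), 0 < h1 t)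
    (hpos2 : ∀ t ∈ Set.Ici (0 : ℝ), 0 < h2 t)
    (hpos3 : ∀ t ∈ Set.Ici (0 : ℝ), 0 < h3 t)
    (hode1 : ∀ i ∈ Finset.Icc 1 n, ∀ t ∈ Set.Ici (0 : ℝ),
      HasDerivAt (g i)
        (h1 t / g (n + i) t + h3 t / g (2*n + i) t + h2 t / g (3*n + i) t
          - ρ * g i t * S' t) t)
    (hode2 : ∀ i ∈ Finset.Icc 1 n, ∀ t ∈ Set.Ici (0 : ℝ),
      HasDerivAt (g (n + i))
        (h1 t / g i t + h2 t / g (2*n + i) t + h3 t / g (3*n + i) t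
          - ρ * g (n + i) t * S' t) t)
    (hode3 : ∀ i ∈ Finset.Icc 1 n, ∀ t ∈ Set.Ici (0 : ℝ),
      HasDerivAt (g (2*n + i))
        (h3 t / g i t + h2 t / g (n + i) t + h1 t / g (3*n + i) t
          - ρ * g (2*n + i) t * S' t) t)
    (hode4 : ∀ i ∈ Finset.Icc 1 n, ∀ t ∈ Set.Ici (0 : ℝ),
      HasDerivAt (g (3*n + i))
        (h2 t / g i t + h3 t / g (n + i) t + h1 t / g (2*n + i) t
          - ρ * g (3*n + i) t * S' t) t)
    (hodeh1 : ∀ t ∈ Set.Ici (0 : ℝ),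
      HasDerivAt h1 (-(h1 t) ^ 2 * S1 t - ρ * h1 t * S' t) t) :
    (∀ t ∈ Set.Ici (0 : ℝ), h1 t ≥ 1 / (S1 0 * t + (h1 0)⁻¹)) ∧
      Filter.Tendsto (fun t => ∫ r in (0 : ℝ)..t, h1 r) Filter.atTop Filter.atTop := by
  have hg : ∀ i ∈ Finset.Icc 1 n, ∀ t ∈ Ici (0 : ℝ),
      0 < g i t ∧ 0 < g (n + i) t ∧ 0 < g (2 * n + i) t ∧ 0 < g (3 * n + i) t :=
    fun i hi t ht => forall_mem_Icc_four_mul_blocks (P := fun j => 0 < g j t)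
      (fun j hj => hpos j hj t ht) hi
  have hh : ∀ t ∈ Ici (0 : ℝ), 0 < h1 t ∧ 0 < h2 t ∧ 0 < h3 t :=
    fun t ht => ⟨hpos1 t ht, hpos2 t ht, hpos3 t ht⟩
  have hS_pos : ∀ t ∈ Ici (0 : ℝ), 0 < S1 t ∧ 0 < S2 t ∧ 0 < S3 t := by
    intro t ht
    rw [hS1, hS2, hS3]
    refine ⟨?_, ?_, ?_⟩ <;> refine Finset.sum_pos (fun i hi => ?_) ⟨1, by simpa using hn⟩ <;>
      obtain ⟨_, _, _, _⟩ := hg i hi t ht <;> positivity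
  have hS'_nonneg : ∀ t ∈ Ici (0 : ℝ), 0 ≤ S' t := fun t ht => by
    obtain ⟨_, _, _⟩ := hS_pos t ht
    obtain ⟨_, _, _⟩ := hh t ht
    rw [hS']
    positivity
  have hmono : ∀ i ∈ Finset.Icc 1 n, MonotoneOn (g i) (Ici 0) ∧ MonotoneOn (g (n + i)) (Ici 0) ∧
      MonotoneOn (g (2 * n + i)) (Ici 0) ∧ MonotoneOn (g (3 * n + i)) (Ici 0) := by
    intro i hi
    refine ⟨monotoneOn_Ici_of_hasDerivAt_sub_mul hρ.le (hode1 i hi) ?_ ?_ hS'_nonneg,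
      monotoneOn_Ici_of_hasDerivAt_sub_mul hρ.le (hode2 i hi) ?_ ?_ hS'_nonneg,
      monotoneOn_Ici_of_hasDerivAt_sub_mul hρ.le (hode3 i hi) ?_ ?_ hS'_nonneg,
      monotoneOn_Ici_of_hasDerivAt_sub_mul hρ.le (hode4 i hi) ?_ ?_ hS'_nonneg⟩ <;>
    intro t ht <;> obtain ⟨_, _, _, _⟩ := hg i hi t ht <;> obtain ⟨_, _, _⟩ := hh t ht <;>
    positivity
  have hS1_le : ∀ t ∈ Ici (0 : ℝ), S1 t ≤ S1 0 := by
    intro t ht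
    rw [hS1, hS1]
    refine Finset.sum_le_sum fun i hi => ?_
    obtain ⟨m1, m2, m3, m4⟩ := hmono i hi
    obtain ⟨_, _, _, _⟩ := hg i hi 0 self_mem_Ici
    obtain ⟨_, _, _, _⟩ := hg i hi t ht
    gcongr
    exacts [m1 self_mem_Ici ht ht, m2 self_mem_Ici ht ht, m3 self_mem_Ici ht ht,
      m4 self_mem_Ici ht ht]
  have hbound : ∀ t ∈ Ici (0 : ℝ), h1 t ≥ 1 / (S1 0 * t + (h1 0)⁻¹) := by
    simpa using one_div_le_of_hasDerivAt_riccati hρ.le hodeh1 hpos1 hS1_le hS'_nonneg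
  exact ⟨hbound, tendsto_integral_atTop_of_one_div_le (hS_pos 0 self_mem_Ici).1
    (inv_pos.2 (hpos1 0 self_mem_Ici))
    (fun t ht => (hodeh1 t ht).continuousAt.continuousWithinAt) hbound⟩

/-- Quaternionic Ricci-Bourguignon flow with `ρ < 0`: lower bound for `h₁`
and divergence of `∫_0^t h₁`. -/
theorem quaternion_RB_h1_lower_bound (n : ℕ) (hn : 1 ≤ n) (ρ : ℝ) (hρ : ρ < 0)
    (g : ℕ → ℝ → ℝ) (h1 h2 h3 : ℝ → ℝ) (S1 S2 S3 S' : ℝ → ℝ)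
    (hS1 : ∀ t, S1 t = ∑ i ∈ Finset.Icc 1 n,
      (1 / (g i t * g (n + i) t) + 1 / (g (2*n + i) t * g (3*n + i) t)))
    (hS2 : ∀ t, S2 t = ∑ i ∈ Finset.Icc 1 n,
      (1 / (g i t * g (3*n + i) t) + 1 / (g (n + i) t * g (2*n + i) t)))
    (hS3 : ∀ t, S3 t = ∑ i ∈ Finset.Icc 1 n,
      (1 / (g i t * g (2*n + i) t) + 1 / (g (n + i) t * g (3*n + i) t)))
    (hS' : ∀ t, S' t = h1 t * S1 t + h2 t * S2 t + h3 t * S3 t)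
    (hpos : ∀ j ∈ Finset.Icc 1 (4 * n), ∀ t ∈ Set.Ici (0 : ℝ), 0 < g j t)
    (hpos1 : ∀ t ∈ Set.Ici (0 : ℝ), 0 < h1 t)
    (hpos2 : ∀ t ∈ Set.Ici (0 : ℝ), 0 < h2 t)
    (hpos3 : ∀ t ∈ Set.Ici (0 : ℝ), 0 < h3 t)
    (hode1 : ∀ i ∈ Finset.Icc 1 n, ∀ t ∈ Set.Ici (0 : ℝ),
      HasDerivAt (g i)
        (h1 t / g (n + i) t + h3 t / g (2*n + i) t + h2 t / g (3*n + i) t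
          - ρ * g i t * S' t) t)
    (hode2 : ∀ i ∈ Finset.Icc 1 n, ∀ t ∈ Set.Ici (0 : ℝ),
      HasDerivAt (g (n + i))
        (h1 t / g i t + h2 t / g (2*n + i) t + h3 t / g (3*n + i) t
          - ρ * g (n + i) t * S' t) t)
    (hode3 : ∀ i ∈ Finset.Icc 1 n, ∀ t ∈ Set.Ici (0 : ℝ),
      HasDerivAt (g (2*n + i))
        (h3 t / g i t + h2 t / g (n + i) t + h1 t / g (3*n + i) t
          - ρ * g (2*n + i) t * S' t) t)
    (hode4 : ∀ i ∈ Finset.Icc 1 n, ∀ t ∈ Set.Ici (0 : ℝ),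
      HasDerivAt (g (3*n + i))
        (h2 t / g i t + h3 t / g (n + i) t + h1 t / g (2*n + i) t
          - ρ * g (3*n + i) t * S' t) t)
    (hodeh1 : ∀ t ∈ Set.Ici (0 : ℝ),
      HasDerivAt h1 (-(h1 t) ^ 2 * S1 t - ρ * h1 t * S' t) t)
    (hodeh2 : ∀ t ∈ Set.Ici (0 : ℝ),
      HasDerivAt h2 (-(h2 t) ^ 2 * S2 t - ρ * h2 t * S' t) t)
    (hodeh3 : ∀ t ∈ Set.Ici (0 : ℝ),
      HasDerivAt h3 (-(h3 t) ^ 2 * S3 t - ρ * h3 t * S' t) t) :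
    (∀ t ∈ Set.Ici (0 : ℝ), h1 t ≥ 1 / (S1 0 * t + (h1 0)⁻¹)) ∧
      Filter.Tendsto (fun t => ∫ r in (0 : ℝ)..t, h1 r) Filter.atTop Filter.atTop :=
  quaternion_RB_h1_lower_bound_general n hn ρ hρ g h1 h2 h3 S1 S2 S3 S' hS1 hS2 hS3 hS' hpos hpos1
    hpos2 hpos3 hode1 hode2 hode3 hode4 hodeh1
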